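/- Every YES-instance (D,K,T) of MD-RSPP has a solution path cover (Q_κ)_{κ∈K} with the following property: writing Q(v) = {κ ∈ K : v lies on Q_κ} for each vertex v, any two distinct vertices u and v that each lie on at least one path of the cover and are not the source of any commodity in K satisfy Q(u) ≠ Q(v). -/

import Mathlib

open Relation

variable {V : Type*} [DecidableEq V]

/-- The adjacency relation of a digraph given by its edge set. -/
def Adj (E : Finset (V × V)) : V → V → Prop := fun a b => (a, b) ∈ E

/-- `D` is a digraph: no self-loops (no parallel edges since edges form a set). -/
def IsDigraph (D : Finset (V × V)) : Prop := ∀ e ∈ D, e.1 ≠ e.2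

/-- `l` is a directed `s`-`t`-path w.r.t. the adjacency relation `A`:
a nonempty duplicate-free list of vertices, consecutive ones adjacent,
starting at `s` and ending at `t`. -/
def DiPath (A : V → V → Prop) (s t : V) (l : List V) : Prop :=
  l.Chain' A ∧ l.Nodup ∧ l.head? = some s ∧ l.getLast? = some t

/-- Adjacency in the transitive closure `T(D)` of the digraph with edge set `E`:
`(u,v)` is an edge iff `u ≠ v` and `v` is reachable from `u` in `E`. -/
def TCAdj (E : Finset (V × V)) (u v : V) : Prop :=
  u ≠ v ∧ Relation.ReflTransGen (Adj E) u v

/-- The outdegree of `v` in the digraph with edge set `H`. -/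
def outDeg (H : Finset (V × V)) (v : V) : ℕ :=
  (H.filter fun e => e.1 = v).card

/-- The list of (directed) edges traversed by a list of vertices. -/
def listEdges (l : List V) : List (V × V) := l.zip l.tail

/-- `H` is a solution graph of the MD-RSPP instance `(D,K,T)`: a subgraph of
`T(D)` of maximum outdegree at most `T` containing a directed `s`-`t`-path for
every commodity `(s,t) ∈ K`. -/
def RSPPSolution (D K : Finset (V × V)) (T : ℕ) (H : Finset (V × V)) : Prop :=
  (∀ e ∈ H, TCAdj D e.1 e.2) ∧ (∀ v, outDeg H v ≤ T) ∧
  (∀ k ∈ K, ∃ l, DiPath (Adj H) k.1 k.2 l)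

/-!
Take a solution path cover of minimum total length. Suppose two distinct non-source vertices
`u`, `v` lie on exactly the same paths. On each such path, say `u` comes first; its predecessor
`a` reaches `v` in `D`, so the stretch from `u` to just before `v` can be replaced by the single
edge `a → v` of `T(D)`. Afterwards no path visits both `u` and `v`, so a new edge `x → v`
(resp. `x → u`) replaces an edge `x → u` (resp. `x → v`) that is gone: no outdegree grows,
while the cover gets strictly shorter.
-/

section ListEdges

variable {α : Type*}

theorem listEdges_cons_cons (a b : α) (l : List α) :
    listEdges (a :: b :: l) = (a, b) :: listEdges (b :: l) := rfl

theorem mem_tail_of_mem_listEdges {p : α × α} {l : List α} (h : p ∈ listEdges l) :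
    p.2 ∈ l.tail :=
  (List.of_mem_zip h).2

theorem isChain_iff_forall_mem_listEdges {R : α → α → Prop} {l : List α} :
    l.IsChain R ↔ ∀ p ∈ listEdges l, R p.1 p.2 := by
  induction l with
  | nil => simp [listEdges]
  | cons a l ih =>
    cases l with
    | nil => simp [listEdges]
    | cons b l => simp [List.isChain_cons_cons, listEdges_cons_cons, ih]

theorem listEdges_concat_append_cons (l : List α) (a b : α) (m : List α) :
    listEdges (l ++ [a] ++ b :: m) = listEdges (l ++ [a]) ++ (a, b) :: listEdges (b :: m) := by
  induction l with
  | nil => rfl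
  | cons x l ih =>
    cases l with
    | nil => rfl
    | cons y l => simpa [listEdges_cons_cons] using ih

theorem listEdges_sublist_cons (x : α) (l : List α) :
    (listEdges l).Sublist (listEdges (x :: l)) := by
  cases l with
  | nil => exact List.Sublist.refl _
  | cons y l => rw [listEdges_cons_cons]; exact List.sublist_cons_self _ _

theorem listEdges_sublist_append (l m : List α) :
    (listEdges m).Sublist (listEdges (l ++ m)) := by
  induction l with
  | nil => exact List.Sublist.refl _
  | cons x l ih => exact ih.trans (listEdges_sublist_cons x _)

end ListEdges

section Paths

variable {α : Type*} {D : Finset (α × α)} {s t u v : α} {l : List α}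

theorem DiPath.mono {R S : α → α → Prop} (hRS : ∀ a b, R a b → S a b) (h : DiPath R s t l) :
    DiPath S s t l :=
  ⟨h.1.imp hRS, h.2⟩

theorem DiPath.pairwise_tcAdj (h : DiPath (TCAdj D) s t l) : l.Pairwise (TCAdj D) := by
  have hreach : l.Pairwise (ReflTransGen (Adj D)) :=
    (h.1.imp fun _ _ hab => hab.2).pairwise
  exact (h.2.1.and hreach).imp fun hab => hab

theorem DiPath.of_sublist {l' : List α} (h : DiPath (TCAdj D) s t l) (hsub : l'.Sublist l)
    (hs : l'.head? = some s) (ht : l'.getLast? = some t) : DiPath (TCAdj D) s t l' :=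
  ⟨(h.pairwise_tcAdj.sublist hsub).isChain, h.2.1.sublist hsub, hs, ht⟩

theorem DiPath.shortcut {P M Z : List α} (h : DiPath (TCAdj D) s t (P ++ u :: (M ++ v :: Z)))
    (hP : P ≠ []) : DiPath (TCAdj D) s t (P ++ v :: Z) := by
  refine h.of_sublist ((List.sublist_append_right M _).cons u |>.append_left P) ?_ ?_
  · obtain ⟨x, P, rfl⟩ := List.exists_cons_of_ne_nil hP
    simpa using h.2.2.1
  · rw [← h.2.2.2, List.getLast?_append_cons, List.getLast?_append_cons,
      ← List.cons_append, List.getLast?_append_cons]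

end Paths

-- `Equiv.swap a b` maps `s' \ s` injectively into `s \ s'`.
theorem card_le_card_of_subset_insert_insert {β : Type*} [DecidableEq β] {s s' : Finset β}
    {a b : β} (hsub : s' ⊆ insert a (insert b s)) (ha : a ∈ s' → b ∈ s) (hb : b ∈ s' → a ∈ s) :
    s'.card ≤ s.card := by
  rw [← Finset.card_sdiff_le_card_sdiff_iff]
  refine Finset.card_le_card_of_injOn (Equiv.swap a b) (fun p hp => ?_)
    (Equiv.swap a b).injective.injOn
  simp only [Finset.coe_sdiff, Set.mem_sdiff, Finset.mem_coe] at hp ⊢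
  obtain ⟨hps', hps⟩ := hp
  rcases Finset.mem_insert.mp (hsub hps') with rfl | hp
  · exact ⟨by simpa using ha hps', fun h => hps (hb (by simpa using h))⟩
  · rcases Finset.mem_insert.mp hp with rfl | hp
    · exact ⟨by simpa using hb hps', fun h => hps (ha (by simpa using h))⟩
    · exact absurd hp hps

section Redirection

variable {α : Type*} {u v : α}

def IsRedirection (u v : α) (E E' : Finset (α × α)) : Prop :=
  (∀ p ∈ E', p ∈ E ∨ p.2 = u ∨ p.2 = v) ∧
    (∀ x, (x, v) ∈ E' → (x, u) ∈ E) ∧ (∀ x, (x, u) ∈ E' → (x, v) ∈ E)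

theorem IsRedirection.symm {E E' : Finset (α × α)} (h : IsRedirection u v E E') :
    IsRedirection v u E E' :=
  ⟨fun p hp => (h.1 p hp).imp_right Or.symm, h.2.2, h.2.1⟩

theorem IsRedirection.biUnion [DecidableEq α] {ι : Type*} {K : Finset ι}
    {f g : ι → Finset (α × α)} (h : ∀ k ∈ K, IsRedirection u v (f k) (g k)) :
    IsRedirection u v (K.biUnion f) (K.biUnion g) := by
  simp only [IsRedirection, Finset.mem_biUnion]
  refine ⟨?_, ?_, ?_⟩
  · rintro p ⟨k, hk, hp⟩
    exact (h k hk).1 p hp |>.imp_left fun hp => ⟨k, hk, hp⟩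
  · rintro x ⟨k, hk, hx⟩
    exact ⟨k, hk, (h k hk).2.1 x hx⟩
  · rintro x ⟨k, hk, hx⟩
    exact ⟨k, hk, (h k hk).2.2 x hx⟩

theorem IsRedirection.outDeg_le [DecidableEq α] {E E' : Finset (α × α)}
    (h : IsRedirection u v E E') (x : α) : outDeg E' x ≤ outDeg E x := by
  refine card_le_card_of_subset_insert_insert (a := (x, u)) (b := (x, v)) ?_ ?_ ?_
  · intro p hp
    obtain ⟨hpE', rfl⟩ := Finset.mem_filter.mp hp
    rcases h.1 p hpE' with hpE | hpu | hpv
    · exact Finset.mem_insert_of_mem (Finset.mem_insert_of_mem (Finset.mem_filter.mpr ⟨hpE, rfl⟩))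
    · simp [← hpu]
    · simp [← hpv]
  · intro hu
    exact Finset.mem_filter.mpr ⟨h.2.2 x (Finset.mem_filter.mp hu).1, rfl⟩
  · intro hv
    exact Finset.mem_filter.mpr ⟨h.2.1 x (Finset.mem_filter.mp hv).1, rfl⟩

variable [DecidableEq α]

theorem isRedirection_listEdges_self {l : List α} (hu : u ∉ l) (hv : v ∉ l) :
    IsRedirection u v (listEdges l).toFinset (listEdges l).toFinset := by
  refine ⟨fun p hp => Or.inl hp, fun x hx => ?_, fun x hx => ?_⟩
  · exact absurd (List.mem_of_mem_tail (mem_tail_of_mem_listEdges (List.mem_toFinset.mp hx))) hv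
  · exact absurd (List.mem_of_mem_tail (mem_tail_of_mem_listEdges (List.mem_toFinset.mp hx))) hu

theorem isRedirection_listEdges_shortcut {P M Z : List α}
    (hl : (P ++ u :: (M ++ v :: Z)).Nodup) (hP : P ≠ []) :
    IsRedirection u v (listEdges (P ++ u :: (M ++ v :: Z))).toFinset
      (listEdges (P ++ v :: Z)).toFinset := by
  obtain ⟨A, a, hAa⟩ := (List.eq_nil_or_concat P).resolve_left hP
  rw [List.concat_eq_append] at hAa
  subst hAa
  have hu : u ∉ A ++ [a] ++ v :: Z := fun h =>
    (List.nodup_cons.mp (List.nodup_middle.mp hl)).1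
      ((List.sublist_append_right M _).append_left _ |>.subset h)
  have hv : v ∉ (A ++ [a] ++ u :: M) ++ Z := by
    have := hl
    rw [← List.cons_append, ← List.append_assoc] at this
    exact (List.nodup_cons.mp (List.nodup_middle.mp this)).1
  have hsuffix : listEdges (v :: Z) ⊆ listEdges (u :: (M ++ v :: Z)) :=
    (listEdges_sublist_append (u :: M) (v :: Z)).subset
  refine ⟨?_, ?_, fun x hx => absurd (List.mem_of_mem_tail
    (mem_tail_of_mem_listEdges (List.mem_toFinset.mp hx))) hu⟩ <;>
  simp only [List.mem_toFinset, listEdges_concat_append_cons, List.mem_append, List.mem_cons,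
    Prod.forall, Prod.mk.injEq]
  · rintro x y (hxy | ⟨rfl, rfl⟩ | hxy)
    · exact Or.inl (Or.inl hxy)
    · exact Or.inr (Or.inr rfl)
    · exact Or.inl (Or.inr (Or.inr (hsuffix hxy)))
  · rintro x (hx | ⟨rfl, -⟩ | hx)
    · exact absurd (List.mem_of_mem_tail (mem_tail_of_mem_listEdges hx)) (by simp_all)
    · simp
    · exact absurd (mem_tail_of_mem_listEdges hx) (by simp_all)

end Redirection

theorem DiPath.exists_shortcut {α : Type*} [DecidableEq α] {D : Finset (α × α)} {s t u v : α}
    {l : List α} (h : DiPath (TCAdj D) s t l) (hu : u ∈ l) (hv : v ∈ l) (huv : u ≠ v)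
    (hsu : s ≠ u) (hsv : s ≠ v) :
    ∃ l', DiPath (TCAdj D) s t l' ∧ l'.length < l.length ∧
      IsRedirection u v (listEdges l).toFinset (listEdges l').toFinset := by
  wlog horder : ∃ P M Z, l = P ++ u :: (M ++ v :: Z) generalizing u v
  · obtain ⟨P, R, rfl⟩ := List.append_of_mem hu
    have hvP : v ∈ P := by
      rcases List.mem_append.mp hv with hvP | hvR
      · exact hvP
      · obtain ⟨M, Z, rfl⟩ := List.append_of_mem ((List.mem_cons.mp hvR).resolve_left huv.symm)
        exact absurd ⟨P, M, Z, rfl⟩ horder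
    obtain ⟨A, M, rfl⟩ := List.append_of_mem hvP
    obtain ⟨l', hl', hlt, hred⟩ :=
      this hv hu huv.symm hsv hsu ⟨A, M, R, by rw [List.append_assoc, List.cons_append]⟩
    exact ⟨l', hl', hlt, hred.symm⟩
  obtain ⟨P, M, Z, rfl⟩ := horder
  have hP : P ≠ [] := by
    rintro rfl
    exact hsu (Option.some_inj.mp h.2.2.1).symm
  exact ⟨P ++ v :: Z, h.shortcut hP, by simp, isRedirection_listEdges_shortcut h.2.1 hP⟩

section PathCover

variable {α : Type*} [DecidableEq α] {D K : Finset (α × α)} {T : ℕ} {Q : α × α → List α}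

theorem outDeg_mono {H H' : Finset (α × α)} (h : H ⊆ H') (x : α) : outDeg H x ≤ outDeg H' x :=
  Finset.card_le_card (Finset.filter_subset_filter _ h)

def coverEdges (K : Finset (α × α)) (Q : α × α → List α) : Finset (α × α) :=
  K.biUnion fun k => (listEdges (Q k)).toFinset

def totalLength (K : Finset (α × α)) (Q : α × α → List α) : ℕ :=
  ∑ k ∈ K, (Q k).length

def IsSolutionPathCover (D K : Finset (α × α)) (T : ℕ) (Q : α × α → List α) : Prop :=
  (∀ k ∈ K, DiPath (TCAdj D) k.1 k.2 (Q k)) ∧ ∀ x, outDeg (coverEdges K Q) x ≤ T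

theorem IsSolutionPathCover.rsppSolution (hQ : IsSolutionPathCover D K T Q) :
    RSPPSolution D K T (coverEdges K Q) := by
  refine ⟨fun e he => ?_, hQ.2, fun k hk => ⟨Q k, ?_⟩⟩
  · obtain ⟨k, hk, hek⟩ := Finset.mem_biUnion.mp he
    exact isChain_iff_forall_mem_listEdges.mp (hQ.1 k hk).1 e (List.mem_toFinset.mp hek)
  · refine ⟨isChain_iff_forall_mem_listEdges.mpr fun p hp => ?_, (hQ.1 k hk).2⟩
    exact Finset.mem_biUnion.mpr ⟨k, hk, List.mem_toFinset.mpr hp⟩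

theorem exists_isSolutionPathCover {H : Finset (α × α)} (hH : RSPPSolution D K T H) :
    ∃ Q, IsSolutionPathCover D K T Q := by
  choose! Q hQ using hH.2.2
  have hsub : coverEdges K Q ⊆ H := fun e he => by
    obtain ⟨k, hk, hek⟩ := Finset.mem_biUnion.mp he
    exact isChain_iff_forall_mem_listEdges.mp (hQ k hk).1 e (List.mem_toFinset.mp hek)
  exact ⟨Q, fun k hk => (hQ k hk).mono fun a b hab => hH.1 (a, b) hab,
    fun x => (outDeg_mono hsub x).trans (hH.2.1 x)⟩

theorem IsSolutionPathCover.exists_totalLength_lt (hQ : IsSolutionPathCover D K T Q) {u v : α}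
    (huv : u ≠ v) (htype : K.filter (fun k => u ∈ Q k) = K.filter (fun k => v ∈ Q k))
    (hu : ∃ k ∈ K, u ∈ Q k) (hsu : ∀ k ∈ K, k.1 ≠ u) (hsv : ∀ k ∈ K, k.1 ≠ v) :
    ∃ Q', IsSolutionPathCover D K T Q' ∧ totalLength K Q' < totalLength K Q := by
  have hiff := Finset.filter_inj'.mp htype
  have hstep : ∀ k ∈ K, ∃ l, DiPath (TCAdj D) k.1 k.2 l ∧ l.length ≤ (Q k).length ∧
      (u ∈ Q k → l.length < (Q k).length) ∧
      IsRedirection u v (listEdges (Q k)).toFinset (listEdges l).toFinset := by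
    intro k hk
    by_cases hku : u ∈ Q k
    · obtain ⟨l, hl, hlt, hred⟩ :=
        (hQ.1 k hk).exists_shortcut hku ((hiff hk).mp hku) huv (hsu k hk) (hsv k hk)
      exact ⟨l, hl, hlt.le, fun _ => hlt, hred⟩
    · exact ⟨Q k, hQ.1 k hk, le_rfl, (absurd · hku),
        isRedirection_listEdges_self hku (mt (hiff hk).mpr hku)⟩
  choose! Q' hpath hle hlt hred using hstep
  obtain ⟨k₀, hk₀, hu₀⟩ := hu
  exact ⟨Q', ⟨hpath, fun x => ((IsRedirection.biUnion hred).outDeg_le x).trans (hQ.2 x)⟩,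
    Finset.sum_lt_sum hle ⟨k₀, hk₀, hlt k₀ hk₀ hu₀⟩⟩

end PathCover

theorem mdrspp_distinct_types_cover_general {V : Type*} [DecidableEq V]
    (D K : Finset (V × V)) (T : ℕ)
    (hyes : ∃ H : Finset (V × V), RSPPSolution D K T H) :
    ∃ Q : V × V → List V,
      (∀ k ∈ K, DiPath (TCAdj D) k.1 k.2 (Q k)) ∧
      RSPPSolution D K T (K.biUnion fun k => (listEdges (Q k)).toFinset) ∧
      (∀ u v : V, u ≠ v →
        (∃ k ∈ K, u ∈ Q k) → (∃ k ∈ K, v ∈ Q k) →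
        (∀ k ∈ K, k.1 ≠ u) → (∀ k ∈ K, k.1 ≠ v) →
        K.filter (fun k => u ∈ Q k) ≠ K.filter (fun k => v ∈ Q k)) := by
  obtain ⟨H, hH⟩ := hyes
  obtain ⟨Q, hQ, hmin⟩ := (measure (totalLength K)).wf.has_min
    {Q | IsSolutionPathCover D K T Q} (exists_isSolutionPathCover hH)
  refine ⟨Q, hQ.1, hQ.rsppSolution, fun u v huv hu _ hsu hsv htype => ?_⟩
  obtain ⟨Q', hQ', hlt⟩ := hQ.exists_totalLength_lt huv htype hu hsu hsv
  exact hmin Q' hQ' hlt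

/-- Every YES-instance `(D,K,T)` of MD-RSPP has a solution
path cover `Q` such that, writing `Q(v) = {κ ∈ K : v lies on Q κ}`, any two
distinct vertices `u, v` that each lie on at least one path of the cover and
are not the source of any commodity satisfy `Q(u) ≠ Q(v)`. -/
theorem mdrspp_distinct_types_cover {V : Type*} [Fintype V] [DecidableEq V]
    (D K : Finset (V × V)) (T : ℕ)
    (hD : IsDigraph D)
    (hyes : ∃ H : Finset (V × V), RSPPSolution D K T H) :
    ∃ Q : V × V → List V,
      (∀ k ∈ K, DiPath (TCAdj D) k.1 k.2 (Q k)) ∧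
      RSPPSolution D K T (K.biUnion fun k => (listEdges (Q k)).toFinset) ∧
      (∀ u v : V, u ≠ v →
        (∃ k ∈ K, u ∈ Q k) → (∃ k ∈ K, v ∈ Q k) →
        (∀ k ∈ K, k.1 ≠ u) → (∀ k ∈ K, k.1 ≠ v) →
        K.filter (fun k => u ∈ Q k) ≠ K.filter (fun k => v ∈ Q k)) :=
  mdrspp_distinct_types_cover_general D K T hyes
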